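/- Let w be a word in {1',1,2',2} in canonical form whose lattice walk ends at a point (x,y) with x ≥ 2. Then the final F-critical substring of w does not have type 5F, hence F(w) is defined. -/
import Mathlib


inductive SLetter : Type
  | one' : SLetter
  | one : SLetter
  | two' : SLetter
  | two : SLetter
  deriving DecidableEq

open SLetter

/-- One step of the lattice walk: from position `p`, the letter `l` moves as follows.
On the axes (`p.1 = 0` or `p.2 = 0`), `1'` and `1` step east while `2'` and `2` step north;
off the axes, `1'` steps east, `1` south, `2'` west, and `2` north. -/
def walkStep (p : ℤ × ℤ) (l : SLetter) : ℤ × ℤ :=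
  if p.1 = 0 ∨ p.2 = 0 then
    match l with
    | one' | one => (p.1 + 1, p.2)
    | two' | two => (p.1, p.2 + 1)
  else
    match l with
    | one' => (p.1 + 1, p.2)
    | one => (p.1, p.2 - 1)
    | two' => (p.1 - 1, p.2)
    | two => (p.1, p.2 + 1)

/-- The endpoint of the lattice walk of the word `w` started at `p`. -/
def walk (p : ℤ × ℤ) (w : List SLetter) : ℤ × ℤ :=
  w.foldl walkStep p

/-- Rank of a letter in the order `1' < 1 < 2' < 2`. -/
def rank : SLetter → ℕ
  | one' => 0
  | one => 1
  | two' => 2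
  | two => 3

/-- Whether a letter is primed. -/
def primed : SLetter → Bool
  | one' => true
  | two' => true
  | _ => false

/-- Number of `1`-valued letters (`1` or `1'`) of `w`. -/
def wt1 (w : List SLetter) : ℕ :=
  (w.filter fun l => decide (l = one ∨ l = one')).length

/-- Number of `2`-valued letters (`2` or `2'`) of `w`. -/
def wt2 (w : List SLetter) : ℕ :=
  (w.filter fun l => decide (l = two ∨ l = two')).length

/-- The standardization of `w`: position `j` receives the number of positions `j'` whose
letter is smaller, ties among equal unprimed letters broken left-to-right and ties among
equal primed letters broken right-to-left.  (Numbers here start from `0` rather than `1`.) -/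
def stdList (w : List SLetter) : List ℕ :=
  (List.range w.length).map fun j =>
    ((List.range w.length).filter fun j' =>
      decide (rank (w.getD j' one) < rank (w.getD j one) ∨
        (rank (w.getD j' one) = rank (w.getD j one) ∧
          (if primed (w.getD j one) then j < j' else j' < j)))).length

/-- Canonicalization: unprime the first letter of each numerical value.
The booleans record whether a `1`-valued (resp. `2`-valued) letter has been seen. -/
def canonAux : Bool → Bool → List SLetter → List SLetter
  | _, _, [] => []
  | s1, s2, one' :: ls => (if s1 then one' else one) :: canonAux true s2 ls
  | _, s2, one :: ls => one :: canonAux true s2 ls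
  | s1, s2, two' :: ls => (if s2 then two' else two) :: canonAux s1 true ls
  | s1, _, two :: ls => two :: canonAux s1 true ls

/-- The canonical form of a word. -/
def canonize (w : List SLetter) : List SLetter := canonAux false false w

/-- A word is in canonical form if the first letter of each numerical value is unprimed. -/
def IsCanonical (w : List SLetter) : Prop := canonize w = w

/-- Type 1F critical substring: `1 (1')* 2'` occupying indices `k..l` of `v`, located at
`y = 0` or at `y = 1, x ≥ 1`. -/
def Crit1F (v : List SLetter) (k l : ℕ) : Prop :=
  k < l ∧ l < v.length ∧ v.getD k SLetter.one = SLetter.one ∧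
    v.getD l SLetter.one = SLetter.two' ∧
    (∀ m, k < m → m < l → v.getD m SLetter.one = SLetter.one') ∧
    ((walk (0, 0) (v.take k)).2 = 0 ∨
      ((walk (0, 0) (v.take k)).2 = 1 ∧ 1 ≤ (walk (0, 0) (v.take k)).1))

/-- Type 2F critical substring: `1 (2)* 1'` occupying indices `k..l` of `v`, located at
`x = 0` or at `x = 1, y ≥ 1`. -/
def Crit2F (v : List SLetter) (k l : ℕ) : Prop :=
  k < l ∧ l < v.length ∧ v.getD k SLetter.one = SLetter.one ∧
    v.getD l SLetter.one = SLetter.one' ∧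
    (∀ m, k < m → m < l → v.getD m SLetter.one = SLetter.two) ∧
    ((walk (0, 0) (v.take k)).1 = 0 ∨
      ((walk (0, 0) (v.take k)).1 = 1 ∧ 1 ≤ (walk (0, 0) (v.take k)).2))

/-- Type 3F critical substring: a single `1` at `y = 0`. -/
def Crit3F (v : List SLetter) (k : ℕ) : Prop :=
  k < v.length ∧ v.getD k SLetter.one = SLetter.one ∧ (walk (0, 0) (v.take k)).2 = 0

/-- Type 4F critical substring: a single `1'` at `x = 0`. -/
def Crit4F (v : List SLetter) (k : ℕ) : Prop :=
  k < v.length ∧ v.getD k SLetter.one = SLetter.one' ∧ (walk (0, 0) (v.take k)).1 = 0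

/-- Type 5F critical substring: a single `1` or `2'` at `x = 1, y ≥ 1` (stepping south
or west respectively). -/
def Crit5F (v : List SLetter) (k : ℕ) : Prop :=
  k < v.length ∧
    (v.getD k SLetter.one = SLetter.one ∨ v.getD k SLetter.one = SLetter.two') ∧
    (walk (0, 0) (v.take k)).1 = 1 ∧ 1 ≤ (walk (0, 0) (v.take k)).2

/-- `w` has an `F`-critical substring of type `t` occupying indices `k..l` in some
representative `v` of `w` (a word with the same canonical form). -/
def CritAt (w : List SLetter) (k l t : ℕ) : Prop :=
  ∃ v, canonize v = w ∧
    ((t = 1 ∧ Crit1F v k l) ∨ (t = 2 ∧ Crit2F v k l) ∨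
     (t = 3 ∧ l = k ∧ Crit3F v k) ∨ (t = 4 ∧ l = k ∧ Crit4F v k) ∨
     (t = 5 ∧ l = k ∧ Crit5F v k))

/-- `F(w)` is defined: the final `F`-critical substring of `w` (latest starting index,
longest in case of a tie) exists and does not have type 5F. -/
def FDefined (w : List SLetter) : Prop :=
  ∃ k l t, t ≠ 5 ∧ CritAt w k l t ∧
    ∀ k' l' t', CritAt w k' l' t' → k' < k ∨ (k' = k ∧ l' ≤ l)


section Aux

private lemma walk_cons (p : ℤ × ℤ) (l : SLetter) (v : List SLetter) :
    walk p (l :: v) = walk (walkStep p l) v := rfl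

private lemma ws_two (p : ℤ × ℤ) : walkStep p two = (p.1, p.2 + 1) := by
  unfold walkStep; split <;> rfl

private lemma ws_one' (p : ℤ × ℤ) : walkStep p one' = (p.1 + 1, p.2) := by
  unfold walkStep; split <;> rfl

private lemma ws_one_axis (p : ℤ × ℤ) (h : p.1 = 0 ∨ p.2 = 0) :
    walkStep p one = (p.1 + 1, p.2) := by
  unfold walkStep; rw [if_pos h]

private lemma ws_one_off (p : ℤ × ℤ) (h : ¬(p.1 = 0 ∨ p.2 = 0)) :
    walkStep p one = (p.1, p.2 - 1) := by
  unfold walkStep; rw [if_neg h]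

private lemma ws_two'_axis (p : ℤ × ℤ) (h : p.1 = 0 ∨ p.2 = 0) :
    walkStep p two' = (p.1, p.2 + 1) := by
  unfold walkStep; rw [if_pos h]

private lemma ws_two'_off (p : ℤ × ℤ) (h : ¬(p.1 = 0 ∨ p.2 = 0)) :
    walkStep p two' = (p.1 - 1, p.2) := by
  unfold walkStep; rw [if_neg h]

private lemma walk_take_succ (w : List SLetter) (p : ℤ × ℤ) (k : ℕ) (hk : k < w.length) :
    walk p (w.take (k+1)) = walkStep (walk p (w.take k)) (w.getD k one) := by
  rw [List.take_succ]
  have h1 : w[k]?.toList = [w.getD k one] := by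
    rw [List.getElem?_eq_getElem hk, List.getD_eq_getElem _ _ hk]; rfl
  rw [h1]
  simp [walk, List.foldl_append]

private lemma walk_nonneg : ∀ (v : List SLetter) (p : ℤ × ℤ), 0 ≤ p.1 → 0 ≤ p.2 →
    0 ≤ (walk p v).1 ∧ 0 ≤ (walk p v).2 := by
  intro v
  induction v with
  | nil => intro p h1 h2; exact ⟨h1, h2⟩
  | cons l ls ih =>
    intro p h1 h2
    rw [walk_cons]
    have : 0 ≤ (walkStep p l).1 ∧ 0 ≤ (walkStep p l).2 := by
      by_cases hax : p.1 = 0 ∨ p.2 = 0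
      · cases l <;> simp [walkStep, if_pos hax] <;> omega
      · cases l <;> simp [walkStep, if_neg hax] <;> omega
    exact ih _ this.1 this.2

private lemma east_class (p : ℤ × ℤ) (l : SLetter) (h : p.1 < (walkStep p l).1) :
    walkStep p l = (p.1 + 1, p.2) ∧ ((l = one ∧ (p.1 = 0 ∨ p.2 = 0)) ∨ l = one') := by
  by_cases hax : p.1 = 0 ∨ p.2 = 0
  · cases l <;> simp_all [walkStep, if_pos hax] <;> omega
  · cases l <;> simp_all [walkStep, if_neg hax] <;> omega

private lemma x_mono (w : List SLetter) (a : ℕ) :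
    ∀ b, a ≤ b →
    (∀ m, a ≤ m → m < b → (walk (0,0) (w.take (m+1))).1 ≤ (walk (0,0) (w.take m)).1) →
    (walk (0,0) (w.take b)).1 ≤ (walk (0,0) (w.take a)).1 := by
  intro b
  induction b with
  | zero =>
    intro h _
    have : a = 0 := Nat.le_zero.mp h
    rw [this]
  | succ b ih =>
    intro hab hmono
    rcases Nat.lt_or_ge a (b+1) with hlt | hge
    · have hab' : a ≤ b := by omega
      have h1 := ih hab' (fun m hm1 hm2 => hmono m hm1 (by omega))
      have h2 := hmono b hab' (by omega)
      omega
    · have : a = b + 1 := by omega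
      rw [this]

private lemma two_run (w : List SLetter) (a : ℕ) :
    ∀ b, a ≤ b → b ≤ w.length →
    (∀ m, a ≤ m → m < b → w.getD m one = two) →
    walk (0,0) (w.take b) =
      ((walk (0,0) (w.take a)).1, (walk (0,0) (w.take a)).2 + ((b - a : ℕ) : ℤ)) := by
  intro b
  induction b with
  | zero =>
    intro h1 _ _
    have : a = 0 := by omega
    subst this; simp
  | succ b ih =>
    intro hab hb h2
    rcases Nat.lt_or_ge a (b+1) with hlt | hge
    · have hab' : a ≤ b := by omega
      have hr := ih hab' (by omega) (fun m hm1 hm2 => h2 m hm1 (by omega))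
      rw [walk_take_succ w _ b (by omega), h2 b hab' (by omega), ws_two, hr]
      rw [Prod.ext_iff]
      constructor
      · rfl
      · simp; omega
    · have : a = b + 1 := by omega
      subst this; simp

private lemma canonAux_length : ∀ (v : List SLetter) (s1 s2 : Bool),
    (canonAux s1 s2 v).length = v.length := by
  intro v
  induction v with
  | nil => intro s1 s2; rfl
  | cons l ls ih => intro s1 s2; cases l <;> simp [canonAux, ih]

private lemma canonAux_walk : ∀ (v : List SLetter) (s1 s2 : Bool) (p : ℤ × ℤ),
    (s1 = false → p.1 = 0) → (s2 = false → p.2 = 0) →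
    walk p (canonAux s1 s2 v) = walk p v := by
  intro v
  induction v with
  | nil => intro s1 s2 p _ _; rfl
  | cons l ls ih =>
    intro s1 s2 p h1 h2
    cases l with
    | one' =>
      show walk p ((if s1 then one' else one) :: canonAux true s2 ls) = walk p (one' :: ls)
      cases s1 with
      | true =>
        rw [if_pos rfl, walk_cons, walk_cons]
        exact ih true s2 _ (by simp) (fun hs2 => by rw [ws_one']; exact h2 hs2)
      | false =>
        rw [if_neg (by simp), walk_cons, walk_cons,
          ws_one_axis p (Or.inl (h1 rfl)), ← ws_one' p]
        exact ih true s2 _ (by simp) (fun hs2 => by rw [ws_one']; exact h2 hs2)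
    | one =>
      show walk p (one :: canonAux true s2 ls) = walk p (one :: ls)
      rw [walk_cons, walk_cons]
      refine ih true s2 _ (by simp) (fun hs2 => ?_)
      rw [ws_one_axis p (Or.inr (h2 hs2))]; exact h2 hs2
    | two' =>
      show walk p ((if s2 then two' else two) :: canonAux s1 true ls) = walk p (two' :: ls)
      cases s2 with
      | true =>
        rw [if_pos rfl, walk_cons, walk_cons]
        exact ih s1 true _ (fun hs1 => by rw [ws_two'_axis p (Or.inl (h1 hs1))]; exact h1 hs1)
          (by simp)
      | false =>
        rw [if_neg (by simp), walk_cons, walk_cons,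
          ws_two'_axis p (Or.inr (h2 rfl)), ← ws_two p]
        exact ih s1 true _ (fun hs1 => by rw [ws_two]; exact h1 hs1) (by simp)
    | two =>
      show walk p (two :: canonAux s1 true ls) = walk p (two :: ls)
      rw [walk_cons, walk_cons]
      exact ih s1 true _ (fun hs1 => by rw [ws_two]; exact h1 hs1) (by simp)

private lemma canonAux_take : ∀ (v : List SLetter) (s1 s2 : Bool) (m : ℕ),
    canonAux s1 s2 (v.take m) = (canonAux s1 s2 v).take m := by
  intro v
  induction v with
  | nil => intro s1 s2 m; simp [canonAux]
  | cons l ls ih =>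
    intro s1 s2 m
    cases m with
    | zero => cases l <;> rfl
    | succ m => cases l <;> simp [canonAux, ih]

private lemma canonAux_getD_one : ∀ (v : List SLetter) (s1 s2 : Bool) (k : ℕ),
    v.getD k one = one → (canonAux s1 s2 v).getD k one = one := by
  intro v
  induction v with
  | nil => intro s1 s2 k h; simp [canonAux]
  | cons l ls ih =>
    intro s1 s2 k h
    cases k with
    | zero =>
      cases l with
      | one => rfl
      | one' => simp at h
      | two => simp at h
      | two' => simp at h
    | succ k =>
      simp only [List.getD_cons_succ] at h
      cases l <;> simp only [canonAux, List.getD_cons_succ] <;> exact ih _ _ _ h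

private lemma canonAux_getD_two' : ∀ (v : List SLetter) (s1 s2 : Bool) (k : ℕ),
    v.getD k one = two' →
    (canonAux s1 s2 v).getD k one = two' ∨ (canonAux s1 s2 v).getD k one = two := by
  intro v
  induction v with
  | nil => intro s1 s2 k h; simp at h
  | cons l ls ih =>
    intro s1 s2 k h
    cases k with
    | zero =>
      cases l with
      | one => simp at h
      | one' => simp at h
      | two => simp at h
      | two' =>
        cases s2 <;> simp [canonAux]
    | succ k =>
      simp only [List.getD_cons_succ] at h
      cases l <;> simp only [canonAux, List.getD_cons_succ] <;> exact ih _ _ _ h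

private lemma canonAux_s2_true : ∀ (v : List SLetter) (s1 : Bool) (k : ℕ),
    v.getD k one = two' → (canonAux s1 true v).getD k one = two' := by
  intro v
  induction v with
  | nil => intro s1 k h; simp at h
  | cons l ls ih =>
    intro s1 k h
    cases k with
    | zero =>
      cases l with
      | one => simp at h
      | one' => simp at h
      | two => simp at h
      | two' => rfl
    | succ k =>
      simp only [List.getD_cons_succ] at h
      cases l <;> simp only [canonAux, List.getD_cons_succ] <;> exact ih _ _ h

private lemma canonAux_two'_first : ∀ (v : List SLetter) (s1 s2 : Bool) (k : ℕ),
    v.getD k one = two' → (canonAux s1 s2 v).getD k one = two →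
    ∀ m, m < k → v.getD m one = one ∨ v.getD m one = one' := by
  intro v
  induction v with
  | nil => intro s1 s2 k h; simp at h
  | cons l ls ih =>
    intro s1 s2 k h hc
    cases k with
    | zero => intro m hm; omega
    | succ k =>
      intro m hm
      cases m with
      | zero =>
        cases l with
        | one => simp
        | one' => simp
        | two =>
          exfalso
          simp only [canonAux, List.getD_cons_succ] at hc h
          have := canonAux_s2_true ls s1 k h
          rw [hc] at this; exact absurd this (by simp)
        | two' =>
          exfalso
          simp only [canonAux, List.getD_cons_succ] at hc h
          have := canonAux_s2_true ls s1 k h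
          rw [hc] at this; exact absurd this (by simp)
      | succ m =>
        have hm' : m < k := by omega
        cases l with
        | one =>
          simp only [canonAux, List.getD_cons_succ] at hc h ⊢
          exact ih _ _ _ h hc m hm'
        | one' =>
          simp only [canonAux, List.getD_cons_succ] at hc h ⊢
          exact ih _ _ _ h hc m hm'
        | two =>
          exfalso
          simp only [canonAux, List.getD_cons_succ] at hc h
          have := canonAux_s2_true ls s1 k h
          rw [hc] at this; exact absurd this (by simp)
        | two' =>
          exfalso
          simp only [canonAux, List.getD_cons_succ] at hc h
          have := canonAux_s2_true ls s1 k h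
          rw [hc] at this; exact absurd this (by simp)

private lemma canon_first_one : ∀ (v : List SLetter) (s2 : Bool), canonAux false s2 v = v →
    ∀ k, (∀ m, m < k → v.getD m one = two ∨ v.getD m one = two') →
    v.getD k one ≠ one' := by
  intro v
  induction v with
  | nil => intro s2 _ k _; simp
  | cons l ls ih =>
    intro s2 heq k hpre
    cases l with
    | one' =>
      exfalso
      simp only [canonAux, if_neg (Bool.false_ne_true ∘ id)] at heq
      exact absurd (List.head_eq_of_cons_eq heq) (by simp)
    | one =>
      cases k with
      | zero => simp
      | succ k =>
        exfalso
        have := hpre 0 (by omega)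
        simp at this
    | two =>
      simp only [canonAux] at heq
      have htail : canonAux false true ls = ls := List.tail_eq_of_cons_eq heq
      cases k with
      | zero => simp
      | succ k =>
        simp only [List.getD_cons_succ]
        exact ih true htail k (fun m hm => by simpa using hpre (m+1) (by omega))
    | two' =>
      cases s2 with
      | false =>
        exfalso
        simp only [canonAux, if_neg (by simp : ¬(false = true))] at heq
        exact absurd (List.head_eq_of_cons_eq heq) (by simp)
      | true =>
        simp only [canonAux, if_pos rfl] at heq
        have htail : canonAux false true ls = ls := List.tail_eq_of_cons_eq heq
        cases k with
        | zero => simp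
        | succ k =>
          simp only [List.getD_cons_succ]
          exact ih true htail k (fun m hm => by simpa using hpre (m+1) (by omega))

private lemma walk_ones_y : ∀ (u : List SLetter) (p : ℤ × ℤ), p.2 = 0 →
    (∀ l ∈ u, l = one ∨ l = one') → (walk p u).2 = 0 := by
  intro u
  induction u with
  | nil => intro p h _; exact h
  | cons l ls ih =>
    intro p h hmem
    rw [walk_cons]
    rcases hmem l (by simp) with h1 | h1 <;> subst h1
    · rw [ws_one_axis p (Or.inr h)]; exact ih _ h (fun x hx => hmem x (by simp [hx]))
    · rw [ws_one']; exact ih _ h (fun x hx => hmem x (by simp [hx]))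

private lemma critAt_bounds (w : List SLetter) (k l t : ℕ) (h : CritAt w k l t) :
    k ≤ l ∧ l < w.length := by
  obtain ⟨v, hv, hd⟩ := h
  have hlen : v.length = w.length := by
    rw [← hv]; exact (canonAux_length v false false).symm
  rcases hd with ⟨_, h1⟩ | ⟨_, h1⟩ | ⟨_, rfl, h1⟩ | ⟨_, rfl, h1⟩ | ⟨_, rfl, h1⟩
  · exact ⟨le_of_lt h1.1, hlen ▸ h1.2.1⟩
  · exact ⟨le_of_lt h1.1, hlen ▸ h1.2.1⟩
  · exact ⟨le_rfl, hlen ▸ h1.1⟩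
  · exact ⟨le_rfl, hlen ▸ h1.1⟩
  · exact ⟨le_rfl, hlen ▸ h1.1⟩

private lemma chain (w : List SLetter) (hw : canonize w = w) (i : ℕ) (hi : i < w.length)
    (hx2 : 2 ≤ (walk (0,0) w).1)
    (h0 : (walk (0,0) (w.take i)).1 = 0) (hh : 1 ≤ (walk (0,0) (w.take i)).2)
    (hone : w.getD i one = one) :
    ∃ k' l' t', CritAt w k' l' t' ∧ i ≤ k' ∧ i < l' := by
  classical
  have hstep : walk (0,0) (w.take (i+1))
      = ((walk (0,0) (w.take i)).1 + 1, (walk (0,0) (w.take i)).2) := by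
    rw [walk_take_succ w _ i hi, hone, ws_one_axis _ (Or.inl h0)]
  have hex : ∃ j, i < j ∧ j < w.length ∧ w.getD j one ≠ two := by
    by_contra hcon
    push_neg at hcon
    have hrun := two_run w (i+1) w.length (by omega) le_rfl
      (fun m hm1 hm2 => hcon m (by omega) hm2)
    rw [List.take_length] at hrun
    have hx1 : (walk (0,0) w).1 = 1 := by
      rw [hrun, hstep]; simp only [Prod.fst, Prod.snd]; omega
    omega
  set j := Nat.find hex with hjdef
  obtain ⟨hj1, hj2, hj3⟩ := Nat.find_spec hex
  have hmid : ∀ m, i < m → m < j → w.getD m one = two := by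
    intro m h1 h2
    by_contra hc
    exact Nat.find_min hex h2 ⟨h1, by omega, hc⟩
  have hrun := two_run w (i+1) j (by omega) (le_of_lt hj2)
    (fun m hm1 hm2 => hmid m (by omega) hm2)
  have hxj : (walk (0,0) (w.take j)).1 = 1 := by
    rw [hrun, hstep]; simp only [Prod.fst, Prod.snd]; omega
  have hyj : 1 ≤ (walk (0,0) (w.take j)).2 := by
    rw [hrun, hstep]; simp only [Prod.fst, Prod.snd]; omega
  cases hlj : w.getD j one with
  | one' =>
    exact ⟨i, j, 2, ⟨w, hw, Or.inr (Or.inl ⟨rfl,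
      hj1, hj2, hone, hlj, hmid, Or.inl h0⟩)⟩, le_rfl, hj1⟩
  | one =>
    exact ⟨j, j, 5, ⟨w, hw, Or.inr (Or.inr (Or.inr (Or.inr ⟨rfl, rfl,
      hj2, Or.inl hlj, hxj, hyj⟩)))⟩, by omega, hj1⟩
  | two' =>
    exact ⟨j, j, 5, ⟨w, hw, Or.inr (Or.inr (Or.inr (Or.inr ⟨rfl, rfl,
      hj2, Or.inr hlj, hxj, hyj⟩)))⟩, by omega, hj1⟩
  | two => exact absurd hlj hj3

private lemma after5 (w : List SLetter) (hw : canonize w = w) (k : ℕ) (hk : k < w.length)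
    (hx2 : 2 ≤ (walk (0,0) w).1)
    (hL : w.getD k one = one ∨ w.getD k one = two')
    (hx1 : (walk (0,0) (w.take k)).1 = 1) (hy1 : 1 ≤ (walk (0,0) (w.take k)).2) :
    ∃ k' l' t', CritAt w k' l' t' ∧ (k < k' ∨ (k' = k ∧ k < l')) := by
  classical
  have hNN : ∀ m, 0 ≤ (walk (0,0) (w.take m)).1 ∧ 0 ≤ (walk (0,0) (w.take m)).2 :=
    fun m => walk_nonneg _ (0,0) le_rfl le_rfl
  have hoff : ¬((walk (0,0) (w.take k)).1 = 0 ∨ (walk (0,0) (w.take k)).2 = 0) := by omega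
  have hstepk : walk (0,0) (w.take (k+1)) = walkStep (walk (0,0) (w.take k)) (w.getD k one) :=
    walk_take_succ w _ k hk
  have hxk1 : (walk (0,0) (w.take (k+1))).1 ≤ 1 := by
    rcases hL with h | h
    · rw [hstepk, h, ws_one_off _ hoff]; simp only [Prod.fst]; omega
    · rw [hstepk, h, ws_two'_off _ hoff]; simp only [Prod.fst]; omega
  have hex : ∃ i, k < i ∧ (walk (0,0) (w.take i)).1 < (walk (0,0) (w.take (i+1))).1 := by
    by_contra hcon
    push_neg at hcon
    have := x_mono w (k+1) w.length (by omega)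
      (fun m hm1 hm2 => hcon m (by omega))
    rw [List.take_length] at this
    omega
  set i := Nat.find hex with hidef
  obtain ⟨hik, hieast⟩ : k < i ∧ (walk (0,0) (w.take i)).1 < (walk (0,0) (w.take (i+1))).1 :=
    Nat.find_spec hex
  have hin : i < w.length := by
    by_contra hc
    push_neg at hc
    rw [List.take_of_length_le hc, List.take_of_length_le (by omega)] at hieast
    omega
  have hmin : ∀ m, k < m → m < i →
      (walk (0,0) (w.take (m+1))).1 ≤ (walk (0,0) (w.take m)).1 := by
    intro m h1 h2
    by_contra hc
    exact Nat.find_min hex h2 ⟨h1, by omega⟩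
  have hband : ∀ m, k+1 ≤ m → m ≤ i →
      (walk (0,0) (w.take i)).1 ≤ (walk (0,0) (w.take m)).1 ∧
      (walk (0,0) (w.take m)).1 ≤ (walk (0,0) (w.take (k+1))).1 := by
    intro m h1 h2
    constructor
    · exact x_mono w m i h2 (fun m' hm1 hm2 => hmin m' (by omega) hm2)
    · exact x_mono w (k+1) m h1 (fun m' hm1 hm2 => hmin m' (by omega) (by omega))
  have hieast' : (walk (0,0) (w.take i)).1
      < (walkStep (walk (0,0) (w.take i)) (w.getD i one)).1 := by
    rw [← walk_take_succ w _ i hin]; exact hieast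
  have heast := east_class _ _ hieast'
  have hxi01 : (walk (0,0) (w.take i)).1 = 0 ∨ (walk (0,0) (w.take i)).1 = 1 := by
    have h1 := (hband i (by omega) le_rfl).2
    have h2 := (hNN i).1
    omega
  rcases hxi01 with hxi | hxi
  · -- x_i = 0
    rcases heast.2 with ⟨hone, _⟩ | hone'
    · rcases eq_or_lt_of_le (hNN i).2 with hyi | hyi
      · exact ⟨i, i, 3, ⟨w, hw, Or.inr (Or.inr (Or.inl ⟨rfl, rfl, hin, hone, hyi.symm⟩))⟩,
          Or.inl hik⟩
      · obtain ⟨k', l', t', hc, h1, h2⟩ := chain w hw i hin hx2 hxi (by omega) hone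
        exact ⟨k', l', t', hc, Or.inl (by omega)⟩
    · exact ⟨i, i, 4, ⟨w, hw, Or.inr (Or.inr (Or.inr (Or.inl ⟨rfl, rfl, hin, hone', hxi⟩)))⟩,
        Or.inl hik⟩
  · -- x_i = 1
    have hxk1' : (walk (0,0) (w.take (k+1))).1 = 1 := by
      have := (hband (k+1) le_rfl (by omega)).1
      omega
    have hall1 : ∀ m, k+1 ≤ m → m ≤ i → (walk (0,0) (w.take m)).1 = 1 := by
      intro m h1 h2
      have := hband m h1 h2
      omega
    have hwk : w.getD k one = one := by
      rcases hL with h | h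
      · exact h
      · exfalso
        rw [hstepk, h, ws_two'_off _ hoff] at hxk1'
        simp only [Prod.fst] at hxk1'
        omega
    rcases heast.2 with ⟨hone, hax⟩ | hone'
    · have hyi : (walk (0,0) (w.take i)).2 = 0 := by
        rcases hax with h | h
        · omega
        · exact h
      exact ⟨i, i, 3, ⟨w, hw, Or.inr (Or.inr (Or.inl ⟨rfl, rfl, hin, hone, hyi⟩))⟩,
        Or.inl hik⟩
    · -- w[i] = one' : backward chain
      set Q2 := fun m => k ≤ m ∧ m < i ∧ w.getD m one ≠ two with hQ2def
      set j0 := Nat.findGreatest Q2 i with hj0def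
      have hQ2k : Q2 k := ⟨le_rfl, hik, by rw [hwk]; simp⟩
      obtain ⟨hj0k, hj0i, hj0t⟩ : Q2 j0 := Nat.findGreatest_spec (le_of_lt hik) hQ2k
      have hmid2 : ∀ m, j0 < m → m < i → w.getD m one = two := by
        intro m h1 h2
        by_contra hc
        exact Nat.findGreatest_is_greatest h1 (le_of_lt h2) ⟨by omega, h2, hc⟩
      rcases Nat.eq_or_lt_of_le hj0k with hj0eq | hj0gt
      · exact ⟨k, i, 2, ⟨w, hw, Or.inr (Or.inl ⟨rfl, hik, hin, hwk, hone',
          fun m h1 h2 => hmid2 m (by omega) h2, Or.inr ⟨hx1, hy1⟩⟩)⟩, Or.inr ⟨rfl, hik⟩⟩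
      · have hxj0 : (walk (0,0) (w.take j0)).1 = 1 := hall1 j0 (by omega) (le_of_lt hj0i)
        have hxj01 : (walk (0,0) (w.take (j0+1))).1 = 1 := hall1 (j0+1) (by omega) hj0i
        have hstepj0 : walk (0,0) (w.take (j0+1))
            = walkStep (walk (0,0) (w.take j0)) (w.getD j0 one) :=
          walk_take_succ w _ j0 (by omega)
        cases hlj0 : w.getD j0 one with
        | two => exact absurd hlj0 hj0t
        | one' =>
          exfalso
          rw [hstepj0, hlj0, ws_one'] at hxj01
          simp only [Prod.fst] at hxj01
          omega
        | one =>
          have hyj0 : 1 ≤ (walk (0,0) (w.take j0)).2 := by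
            by_contra hc
            push_neg at hc
            have h0' : (walk (0,0) (w.take j0)).2 = 0 := by
              have := (hNN j0).2; omega
            rw [hstepj0, hlj0, ws_one_axis _ (Or.inr h0')] at hxj01
            simp only [Prod.fst] at hxj01
            omega
          exact ⟨j0, i, 2, ⟨w, hw, Or.inr (Or.inl ⟨rfl, hj0i, hin, hlj0, hone', hmid2,
            Or.inr ⟨hxj0, hyj0⟩⟩)⟩, Or.inl hj0gt⟩
        | two' =>
          have hyj0 : (walk (0,0) (w.take j0)).2 = 0 := by
            by_contra hc
            have h1' : ¬((walk (0,0) (w.take j0)).1 = 0 ∨ (walk (0,0) (w.take j0)).2 = 0) := by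
              omega
            rw [hstepj0, hlj0, ws_two'_off _ h1'] at hxj01
            simp only [Prod.fst] at hxj01
            omega
          set m0 := j0 - 1 with hm0def
          have hm0succ : m0 + 1 = j0 := by omega
          have hstepm0 : walk (0,0) (w.take (m0+1))
              = walkStep (walk (0,0) (w.take m0)) (w.getD m0 one) :=
            walk_take_succ w _ m0 (by omega)
          have hxm0 : (walk (0,0) (w.take m0)).1 = 1 := by
            rcases Nat.eq_or_lt_of_le (show k ≤ m0 by omega) with he | hlt
            · rw [← he]; exact hx1
            · exact hall1 m0 (by omega) (by omega)
          have hym0 : 0 ≤ (walk (0,0) (w.take m0)).2 := (hNN m0).2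
          have hX : (walkStep (walk (0,0) (w.take m0)) (w.getD m0 one)).1 = 1 := by
            rw [← hstepm0, hm0succ]; exact hxj0
          have hY : (walkStep (walk (0,0) (w.take m0)) (w.getD m0 one)).2 = 0 := by
            rw [← hstepm0, hm0succ]; exact hyj0
          cases hlm0 : w.getD m0 one with
          | one' =>
            exfalso
            rw [hlm0, ws_one'] at hX
            simp only [Prod.fst] at hX
            omega
          | two =>
            exfalso
            rw [hlm0, ws_two] at hY
            simp only [Prod.snd] at hY
            omega
          | two' =>
            exfalso
            by_cases hax2 : (walk (0,0) (w.take m0)).1 = 0 ∨ (walk (0,0) (w.take m0)).2 = 0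
            · rw [hlm0, ws_two'_axis _ hax2] at hY
              simp only [Prod.snd] at hY
              omega
            · rw [hlm0, ws_two'_off _ hax2] at hX
              simp only [Prod.fst] at hX
              omega
          | one =>
            by_cases hax2 : (walk (0,0) (w.take m0)).1 = 0 ∨ (walk (0,0) (w.take m0)).2 = 0
            · exfalso
              rw [hlm0, ws_one_axis _ hax2] at hX
              simp only [Prod.fst] at hX
              omega
            · rw [hlm0, ws_one_off _ hax2] at hY
              simp only [Prod.snd] at hY
              have hym0' : (walk (0,0) (w.take m0)).2 = 1 := by omega
              refine ⟨m0, j0, 1, ⟨w, hw, Or.inl ⟨rfl, by omega, by omega, hlm0, hlj0,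
                fun m h1 h2 => (show False by omega).elim,
                Or.inr ⟨hym0', by omega⟩⟩⟩, ?_⟩
              rcases Nat.eq_or_lt_of_le (show k ≤ m0 by omega) with he | hlt
              · exact Or.inr ⟨he.symm, by omega⟩
              · exact Or.inl hlt

private lemma exists_crit (w : List SLetter) (hw : canonize w = w)
    (hx2 : 2 ≤ (walk (0,0) w).1) : ∃ k l t, CritAt w k l t := by
  classical
  have hNN : ∀ m, 0 ≤ (walk (0,0) (w.take m)).1 ∧ 0 ≤ (walk (0,0) (w.take m)).2 :=
    fun m => walk_nonneg _ (0,0) le_rfl le_rfl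
  have h00 : walk (0,0) (w.take 0) = ((0 : ℤ), (0 : ℤ)) := rfl
  have hex : ∃ i, (walk (0,0) (w.take i)).1 < (walk (0,0) (w.take (i+1))).1 := by
    by_contra hcon
    push_neg at hcon
    have := x_mono w 0 w.length (Nat.zero_le _) (fun m _ _ => hcon m)
    rw [List.take_length, h00] at this
    simp only [Prod.fst] at this
    omega
  set i := Nat.find hex with hidef
  have hieast := Nat.find_spec hex
  have hin : i < w.length := by
    by_contra hc
    push_neg at hc
    rw [List.take_of_length_le hc, List.take_of_length_le (by omega)] at hieast
    omega
  have hzero : ∀ m, m ≤ i → (walk (0,0) (w.take m)).1 = 0 := by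
    intro m hm
    have h1 := x_mono w 0 m (Nat.zero_le _) (fun m' _ hm' => by
      by_contra hc
      exact Nat.find_min hex (show m' < i by omega) (by omega))
    rw [h00] at h1
    have := (hNN m).1
    simp only [Prod.fst] at h1
    omega
  have hpre : ∀ m, m < i → w.getD m one = two ∨ w.getD m one = two' := by
    intro m hm
    have hstep : walk (0,0) (w.take (m+1)) = walkStep (walk (0,0) (w.take m)) (w.getD m one) :=
      walk_take_succ w _ m (by omega)
    have hx0 : (walk (0,0) (w.take m)).1 = 0 := hzero m (by omega)
    have hx0' : (walk (0,0) (w.take (m+1))).1 = 0 := hzero (m+1) (by omega)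
    cases hl : w.getD m one with
    | one =>
      exfalso
      rw [hstep, hl, ws_one_axis _ (Or.inl hx0)] at hx0'
      simp only [Prod.fst] at hx0'
      omega
    | one' =>
      exfalso
      rw [hstep, hl, ws_one'] at hx0'
      simp only [Prod.fst] at hx0'
      omega
    | two => exact Or.inl rfl
    | two' => exact Or.inr rfl
  have hne : w.getD i one ≠ one' := canon_first_one w false hw i hpre
  have hieast' : (walk (0,0) (w.take i)).1
      < (walkStep (walk (0,0) (w.take i)) (w.getD i one)).1 := by
    rw [← walk_take_succ w _ i hin]; exact hieast
  have heast := east_class _ _ hieast'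
  have hone : w.getD i one = one := by
    rcases heast.2 with ⟨h, _⟩ | h
    · exact h
    · exact absurd h hne
  have hxi : (walk (0,0) (w.take i)).1 = 0 := hzero i le_rfl
  rcases eq_or_lt_of_le (hNN i).2 with hyi | hyi
  · exact ⟨i, i, 3, w, hw, Or.inr (Or.inr (Or.inl ⟨rfl, rfl, hin, hone, hyi.symm⟩))⟩
  · obtain ⟨k', l', t', hc, _, _⟩ := chain w hw i hin hx2 hxi (by omega) hone
    exact ⟨k', l', t', hc⟩

end Aux

/-- If the endpoint of the lattice walk of `w` has `x ≥ 2`, then the final `F`-critical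
substring of `w` does not have type 5F, hence `F(w)` is defined. -/
theorem stmt_15 (w : List SLetter) (hw : IsCanonical w)
    (hx : 2 ≤ (walk (0, 0) w).1) : FDefined w := by
  classical
  have hw' : canonize w = w := hw
  obtain ⟨kw, lw, tw, hcw⟩ := exists_crit w hw' hx
  have hb : ∀ k l t, CritAt w k l t → k ≤ w.length ∧ l ≤ w.length := by
    intro k l t h
    have := critAt_bounds w k l t h
    omega
  set P1 : ℕ → Prop := fun k => ∃ l t, CritAt w k l t with hP1
  set k0 := Nat.findGreatest P1 w.length with hk0
  have hP1k0 : P1 k0 := Nat.findGreatest_spec (hb kw lw tw hcw).1 ⟨lw, tw, hcw⟩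
  have hkmax : ∀ k' l' t', CritAt w k' l' t' → k' ≤ k0 := fun k' l' t' h =>
    Nat.le_findGreatest (hb k' l' t' h).1 ⟨l', t', h⟩
  obtain ⟨l1, t1, hc1⟩ := hP1k0
  set P2 : ℕ → Prop := fun l => ∃ t, CritAt w k0 l t with hP2
  set l0 := Nat.findGreatest P2 w.length with hl0
  have hP2l0 : P2 l0 := Nat.findGreatest_spec (hb k0 l1 t1 hc1).2 ⟨t1, hc1⟩
  have hlmax : ∀ l' t', CritAt w k0 l' t' → l' ≤ l0 := fun l' t' h =>
    Nat.le_findGreatest (hb k0 l' t' h).2 ⟨t', h⟩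
  obtain ⟨t0, hc0⟩ := hP2l0
  by_cases ht5 : t0 = 5
  · exfalso
    subst ht5
    obtain ⟨v, hv, hd⟩ := hc0
    have hd5 : l0 = k0 ∧ Crit5F v k0 := by
      rcases hd with ⟨h, _⟩ | ⟨h, _⟩ | ⟨h, _, _⟩ | ⟨h, _, _⟩ | ⟨_, h1, h2⟩
      · omega
      · omega
      · omega
      · omega
      · exact ⟨h1, h2⟩
    obtain ⟨hl0k0, hkv, hletv, hxv, hyv⟩ :
        l0 = k0 ∧ k0 < v.length ∧
          (v.getD k0 one = one ∨ v.getD k0 one = two') ∧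
          (walk (0,0) (v.take k0)).1 = 1 ∧ 1 ≤ (walk (0,0) (v.take k0)).2 :=
      ⟨hd5.1, hd5.2.1, hd5.2.2.1, hd5.2.2.2.1, hd5.2.2.2.2⟩
    have hv' : canonAux false false v = w := hv
    have hlen : v.length = w.length := by
      rw [← hv']; exact (canonAux_length v false false).symm
    have hwalkeq : ∀ m, walk (0,0) (v.take m) = walk (0,0) (w.take m) := by
      intro m
      have h1 : canonAux false false (v.take m) = (canonAux false false v).take m :=
        canonAux_take v false false m
      have h2 : walk (0,0) (canonAux false false (v.take m)) = walk (0,0) (v.take m) :=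
        canonAux_walk (v.take m) false false (0,0) (fun _ => rfl) (fun _ => rfl)
      rw [← h2, h1, hv']
    have hkw : k0 < w.length := by omega
    have hxw : (walk (0,0) (w.take k0)).1 = 1 := by rw [← hwalkeq]; exact hxv
    have hyw : 1 ≤ (walk (0,0) (w.take k0)).2 := by rw [← hwalkeq]; exact hyv
    have hLw : w.getD k0 one = one ∨ w.getD k0 one = two' := by
      rcases hletv with h | h
      · left
        have := canonAux_getD_one v false false k0 h
        rw [hv'] at this
        exact this
      · rcases canonAux_getD_two' v false false k0 h with h2 | h2
        · right; rw [hv'] at h2; exact h2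
        · exfalso
          have hones := canonAux_two'_first v false false k0 h h2
          have hy0 : (walk (0,0) (v.take k0)).2 = 0 := by
            apply walk_ones_y _ _ rfl
            intro l hl
            obtain ⟨mIdx, hmlt, hmeq⟩ := List.mem_iff_getElem.mp hl
            have hmlt' : mIdx < k0 := by
              have := hmlt
              simp [List.length_take] at this
              omega
            have hmv : mIdx < v.length := by omega
            have : v.getD mIdx one = l := by
              rw [List.getD_eq_getElem _ _ hmv, ← hmeq]
              simp [List.getElem_take]
            rcases hones mIdx hmlt' with h3 | h3 <;> rw [this] at h3 <;> simp [h3]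
          omega
    obtain ⟨k', l', t', hc', hord⟩ := after5 w hw' k0 hkw hx hLw hxw hyw
    rcases hord with h | ⟨he, hlt⟩
    · have := hkmax k' l' t' hc'
      omega
    · subst he
      have := hlmax l' t' hc'
      omega
  · refine ⟨k0, l0, t0, ht5, hc0, ?_⟩
    intro k' l' t' h
    have hk' := hkmax k' l' t' h
    rcases Nat.lt_or_ge k' k0 with h1 | h1
    · exact Or.inl h1
    · have hkk : k' = k0 := by omega
      subst hkk
      exact Or.inr ⟨rfl, hlmax l' t' h⟩
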